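/- arXiv:1802.02562 — 2 statements merged into one kernel-verified Lean document; each statement's English description precedes it below -/
import Mathlib

section
/- For the search problem associated with a matroid M on a finite nonempty ground set L (individuals U = L, feasible solutions S = independent sets of M), a distribution over S is maxmin-fair if and only if it is minmax-Pareto. -/
/-!
A Pareto-efficient distribution is supported on bases, and conversely every distribution over
bases is Pareto-efficient, because each of them gives total satisfaction `rank M`.

For a distribution `p` over bases, say that `b` is swappable for `a` if some base in the support
of `p` stays a base when `b` is exchanged for `a`. Shifting a little mass along a chain of such
swaps from `u` to `v` yields another distribution over bases that lowers `u`, raises `v` and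
leaves everybody else unchanged. If a set `T` contains `b` whenever it contains an `a` for which
`b` is swappable, then every support base of `p` meets `T` in a basis of `T`, so no independent
distribution gives `T` more total satisfaction than `p`. Applied to the individuals from which a
given `u` can be reached, or to the complement of those reachable from `u`, this shows: if `F`
fails to be minmax-Pareto (resp. maxmin-fair) against some competitor, then shifting `F` along a
suitable chain gives a competitor against which `F` fails to be maxmin-fair (resp. minmax-Pareto).
-/

variable {α : Type*}

/-- `p` is a probability distribution over the feasible solutions `sol`. -/
def IsDistrib [Fintype α] (sol : Finset α → Prop) (p : Finset α → ℝ) : Prop :=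
  (∀ A, 0 ≤ p A) ∧ (∀ A, p A ≠ 0 → sol A) ∧ (∑ A : Finset α, p A) = 1

/-- The satisfaction probability of individual `u` under the distribution `p`. -/
def sat [Fintype α] [DecidableEq α] (p : Finset α → ℝ) (u : α) : ℝ :=
  ∑ A : Finset α, if u ∈ A then p A else 0

/-- `F` is a maxmin-fair distribution over the feasible solutions `sol`. -/
def MaxminFair [Fintype α] [DecidableEq α] (sol : Finset α → Prop) (F : Finset α → ℝ) : Prop :=
  IsDistrib sol F ∧
    ∀ D, IsDistrib sol D → ∀ u, sat F u < sat D u →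
      ∃ v, sat D v < sat F v ∧ sat F v ≤ sat F u

/-- `D` is Pareto-efficient. -/
def ParetoEff [Fintype α] [DecidableEq α] (sol : Finset α → Prop) (D : Finset α → ℝ) : Prop :=
  IsDistrib sol D ∧
    ¬ ∃ D', IsDistrib sol D' ∧ (∀ u, sat D u ≤ sat D' u) ∧ ∃ u, sat D u < sat D' u

/-- `F` is minmax-Pareto. -/
def MinmaxPareto [Fintype α] [DecidableEq α] (sol : Finset α → Prop) (F : Finset α → ℝ) : Prop :=
  ParetoEff sol F ∧
    ∀ D, ParetoEff sol D → ∀ u, sat D u < sat F u →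
      ∃ v, sat F v < sat D v ∧ sat F u ≤ sat F v

open Finset Filter Topology Relation

theorem Finset.exists_lt_of_sum_le_of_lt {ι : Type*} {s : Finset ι} {f g : ι → ℝ}
    (hle : ∑ i ∈ s, f i ≤ ∑ i ∈ s, g i) {u : ι} (hu : u ∈ s) (hlt : g u < f u) :
    ∃ v ∈ s, f v < g v := by
  by_contra! H
  exact hle.not_gt (sum_lt_sum H ⟨u, hu, hlt⟩)

theorem Finset.indicator_insert_erase_sub_indicator [DecidableEq α] {A : Finset α} {a b : α}
    (hb : b ∈ A) (ha : a ∉ A) (w : α) :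
    ((if w ∈ (insert a A).erase b then 1 else 0) - (if w ∈ A then 1 else 0) : ℝ)
      = (if w = a then 1 else 0) - (if w = b then 1 else 0) := by
  have hab : a ≠ b := fun h => ha (h ▸ hb)
  by_cases hwa : w = a
  · subst hwa; simp [ha, hab]
  by_cases hwb : w = b
  · subst hwb; simp [hb, hwa]
  simp [hwa, hwb]

section Distributions

variable [Fintype α] [DecidableEq α] {sol : Finset α → Prop}

theorem sat_eq_sum_filter (p : Finset α → ℝ) (u : α) : sat p u = ∑ A with u ∈ A, p A :=
  (sum_filter _ _).symm

theorem sat_add (p q : Finset α → ℝ) (u : α) : sat (p + q) u = sat p u + sat q u := by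
  simp only [sat_eq_sum_filter, Pi.add_apply, sum_add_distrib]

theorem sat_sub (p q : Finset α → ℝ) (u : α) : sat (p - q) u = sat p u - sat q u := by
  simp only [sat_eq_sum_filter, Pi.sub_apply, sum_sub_distrib]

theorem sat_smul (c : ℝ) (p : Finset α → ℝ) (u : α) : sat (c • p) u = c * sat p u := by
  simp only [sat_eq_sum_filter, Pi.smul_apply, smul_eq_mul, mul_sum]

theorem sat_zero (u : α) : sat (0 : Finset α → ℝ) u = 0 := by
  simp [sat]

theorem sat_single (A : Finset α) (u : α) :
    sat (Pi.single A 1) u = if u ∈ A then 1 else 0 := by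
  simp [sat_eq_sum_filter, Pi.single_apply]

theorem sum_sat_eq_sum_card_inter (p : Finset α → ℝ) (T : Finset α) :
    ∑ u ∈ T, sat p u = ∑ A, ((A ∩ T).card : ℝ) * p A := by
  simp only [sat, sum_comm (s := T)]
  refine sum_congr rfl fun A _ => ?_
  rw [sum_ite_mem, sum_const, inter_comm, nsmul_eq_mul]

theorem IsDistrib.sum_sat_le {p : Finset α → ℝ} (hp : IsDistrib sol p) {T : Finset α} {c : ℕ}
    (hc : ∀ A, p A ≠ 0 → (A ∩ T).card ≤ c) : ∑ u ∈ T, sat p u ≤ c := by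
  rw [sum_sat_eq_sum_card_inter]
  calc ∑ A, ((A ∩ T).card : ℝ) * p A ≤ ∑ A, (c : ℝ) * p A := by
        refine sum_le_sum fun A _ => ?_
        rcases eq_or_ne (p A) 0 with hA | hA
        · simp [hA]
        · exact mul_le_mul_of_nonneg_right (by exact_mod_cast hc A hA) (hp.1 A)
    _ = c := by rw [← mul_sum, hp.2.2, mul_one]

theorem IsDistrib.sum_sat_eq {p : Finset α → ℝ} (hp : IsDistrib sol p) {T : Finset α} {c : ℕ}
    (hc : ∀ A, p A ≠ 0 → (A ∩ T).card = c) : ∑ u ∈ T, sat p u = c := by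
  rw [sum_sat_eq_sum_card_inter]
  calc ∑ A, ((A ∩ T).card : ℝ) * p A = ∑ A, (c : ℝ) * p A := by
        refine sum_congr rfl fun A _ => ?_
        rcases eq_or_ne (p A) 0 with hA | hA
        · simp [hA]
        · rw [hc A hA]
    _ = c := by rw [← mul_sum, hp.2.2, mul_one]

end Distributions

section FeasibleDirection

variable [Fintype α] {sol : Finset α → Prop}

/-- The directions `Δ` along which `p + ε • Δ` remains a distribution over `sol` for small
`ε > 0`. -/
def IsFeasibleDirection (sol : Finset α → Prop) (p Δ : Finset α → ℝ) : Prop :=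
  (∑ A, Δ A = 0) ∧ (∀ A, Δ A ≠ 0 → sol A) ∧ ∀ A, Δ A < 0 → p A ≠ 0

theorem IsFeasibleDirection.zero (p : Finset α → ℝ) : IsFeasibleDirection sol p 0 :=
  ⟨by simp, by simp, by simp⟩

theorem IsFeasibleDirection.add {p Δ Δ' : Finset α → ℝ} (h : IsFeasibleDirection sol p Δ)
    (h' : IsFeasibleDirection sol p Δ') : IsFeasibleDirection sol p (Δ + Δ') := by
  refine ⟨by simp [sum_add_distrib, h.1, h'.1], fun A hA => ?_, fun A hA => ?_⟩
  · by_cases hΔ : Δ A = 0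
    · exact h'.2.1 A (by simpa [hΔ] using hA)
    · exact h.2.1 A hΔ
  · by_cases hΔ : Δ A < 0
    · exact h.2.2 A hΔ
    · exact h'.2.2 A (by simp only [Pi.add_apply] at hA; linarith)

theorem IsFeasibleDirection.single_sub_single [DecidableEq α] {p : Finset α → ℝ} {A A' : Finset α}
    (hpA : p A ≠ 0) (hA : sol A) (hA' : sol A') :
    IsFeasibleDirection sol p (Pi.single A' 1 - Pi.single A 1) := by
  refine ⟨by simp [sum_sub_distrib], fun B hB => ?_, fun B hB => ?_⟩
  · by_cases hBA' : B = A'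
    · exact hBA' ▸ hA'
    · by_cases hBA : B = A
      · exact hBA ▸ hA
      · simp [hBA, hBA'] at hB
  · by_cases hBA : B = A
    · exact hBA ▸ hpA
    · simp only [Pi.sub_apply, Pi.single_apply, if_neg hBA] at hB
      split_ifs at hB <;> norm_num at hB

theorem IsDistrib.exists_pos_add_smul {p Δ : Finset α → ℝ} (hp : IsDistrib sol p)
    (hΔ : IsFeasibleDirection sol p Δ) : ∃ ε : ℝ, 0 < ε ∧ IsDistrib sol (p + ε • Δ) := by
  have hnonneg : ∀ᶠ ε in 𝓝[>] (0 : ℝ), ∀ A, 0 ≤ p A + ε * Δ A := by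
    refine eventually_all.2 fun A => ?_
    rcases (hp.1 A).lt_or_eq with hpos | hzero
    · have hlim : Tendsto (fun ε : ℝ => p A + ε * Δ A) (𝓝 0) (𝓝 (p A)) := by
        simpa using ((tendsto_id (x := 𝓝 (0 : ℝ))).mul_const (Δ A)).const_add (p A)
      exact ((hlim.eventually (lt_mem_nhds hpos)).filter_mono nhdsWithin_le_nhds).mono
        fun ε hε => hε.le
    · have hΔA : 0 ≤ Δ A := not_lt.1 fun h => hΔ.2.2 A h hzero.symm
      filter_upwards [self_mem_nhdsWithin] with ε (hε : 0 < ε)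
      rw [← hzero]
      positivity
  obtain ⟨ε, hpε, hε⟩ := (hnonneg.and self_mem_nhdsWithin).exists
  refine ⟨ε, hε, hpε, fun A hA => ?_, ?_⟩
  · by_cases hΔA : Δ A = 0
    · exact hp.2.1 A (by simpa [hΔA] using hA)
    · exact hΔ.2.1 A hΔA
  · simp [sum_add_distrib, ← mul_sum, hp.2.2, hΔ.1]

end FeasibleDirection

theorem MaxminFair.paretoEff [Fintype α] [DecidableEq α] {sol : Finset α → Prop}
    {F : Finset α → ℝ} (h : MaxminFair sol F) : ParetoEff sol F := by
  refine ⟨h.1, fun ⟨D, hD, hdom, u, hu⟩ => ?_⟩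
  obtain ⟨v, hv, -⟩ := h.2 D hD u hu
  exact (hdom v).not_gt hv

namespace Matroid

variable {M : Matroid α}

theorem IsBase.subset_closure_inter_of_exchange_closed {B T : Set α} (hB : M.IsBase B)
    (hTE : T ⊆ M.E) (hT : ∀ a ∈ T, ∀ b ∈ B, a ∉ B → M.IsBase (insert a B \ {b}) → b ∈ T) :
    T ⊆ M.closure (B ∩ T) := by
  intro a haT
  by_cases haB : a ∈ B
  · exact M.mem_closure_of_mem' ⟨haB, haT⟩ (hTE haT)
  by_contra hcl
  have hC := hB.fundCircuit_isCircuit (hTE haT) haB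
  -- the fundamental circuit of `a` must leave `T`, otherwise `B ∩ T` would span `a`
  obtain ⟨b, hbC, hba, hbT⟩ : ∃ b ∈ M.fundCircuit a B, b ≠ a ∧ b ∉ T := by
    by_contra! h
    have hsub : M.fundCircuit a B \ {a} ⊆ B ∩ T := fun x hx =>
      ⟨(Set.mem_insert_iff.1 (M.fundCircuit_subset_insert a B hx.1)).resolve_left hx.2,
        h x hx.1 hx.2⟩
    exact hcl (M.closure_subset_closure hsub
      (hC.mem_closure_sdiff_singleton_of_mem (M.mem_fundCircuit a B)))
  have hbB : b ∈ B := (Set.mem_insert_iff.1 (M.fundCircuit_subset_insert a B hbC)).resolve_left hba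
  have hind := (hB.indep.mem_fundCircuit_iff (hB.closure_eq ▸ hTE haT) haB).1 hbC
  exact hbT (hT a haT b hbB haB (hB.exchange_isBase_of_indep' hbB haB hind))

variable [DecidableEq α]

theorem Indep.card_inter_le_toNat_eRk [Finite α] {B : Finset α} (hB : M.Indep (B : Set α))
    (T : Finset α) : (B ∩ T).card ≤ (M.eRk T).toNat := by
  have h := (hB.subset Set.inter_subset_left).encard_le_eRk_of_subset
    (Set.inter_subset_right (s := (B : Set α)) (t := T))
  rw [← coe_inter, Set.encard_coe_eq_coe_finsetCard] at h
  simpa using ENat.toNat_le_toNat h (M.isRkFinite_set _).eRk_lt_top.ne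

theorem Indep.card_inter_eq_toNat_eRk {A T : Finset α} (hA : M.Indep (A : Set α))
    (hT : (T : Set α) ⊆ M.closure (A ∩ T : Finset α)) : (A ∩ T).card = (M.eRk T).toNat := by
  have h := ((hA.subset (by simp)).isBasis_of_subset_of_subset_closure (by simp) hT).encard_eq_eRk
  rw [Set.encard_coe_eq_coe_finsetCard] at h
  rw [← h, ENat.toNat_natCast]

end Matroid

section MatroidDistributions

variable [Fintype α] {M : Matroid α} {p q : Finset α → ℝ}

def IsBaseDistrib (M : Matroid α) (p : Finset α → ℝ) : Prop :=
  IsDistrib (fun A : Finset α => M.IsBase (A : Set α)) p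

theorem IsBaseDistrib.isDistrib_indep (hp : IsBaseDistrib M p) :
    IsDistrib (fun A : Finset α => M.Indep (A : Set α)) p :=
  ⟨hp.1, fun A hA => (hp.2.1 A hA).indep, hp.2.2⟩

def Swappable (M : Matroid α) (p : Finset α → ℝ) (b a : α) : Prop :=
  ∃ A : Finset α, p A ≠ 0 ∧ b ∈ A ∧ a ∉ A ∧ M.IsBase (insert a (A : Set α) \ {b})

variable [DecidableEq α]

/-- Every support base of `p` meets a swap-closed `T` in a basis of `T`, i.e. in `r(T)` elements,
while any independent set meets `T` in at most `r(T)` elements. -/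
theorem sum_sat_le_of_swap_closed (hE : M.E = Set.univ) (hp : IsBaseDistrib M p)
    (hq : IsDistrib (fun A : Finset α => M.Indep (A : Set α)) q) {T : Finset α}
    (hT : ∀ ⦃a b⦄, Swappable M p b a → a ∈ T → b ∈ T) :
    ∑ u ∈ T, sat q u ≤ ∑ u ∈ T, sat p u := by
  have hspan : ∀ A, p A ≠ 0 → (A ∩ T).card = (M.eRk T).toNat := fun A hA =>
    (hp.2.1 A hA).indep.card_inter_eq_toNat_eRk <| by
      rw [coe_inter]
      exact (hp.2.1 A hA).subset_closure_inter_of_exchange_closed (hE ▸ Set.subset_univ _)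
        fun a ha b hb haA hbase => hT ⟨A, hA, hb, haA, hbase⟩ ha
  rw [IsDistrib.sum_sat_eq hp hspan]
  exact hq.sum_sat_le fun B hB => (hq.2.1 B hB).card_inter_le_toNat_eRk T

theorem sum_sat_le_of_isBaseDistrib (hE : M.E = Set.univ) (hp : IsBaseDistrib M p)
    (hq : IsDistrib (fun A : Finset α => M.Indep (A : Set α)) q) :
    ∑ u, sat q u ≤ ∑ u, sat p u :=
  sum_sat_le_of_swap_closed hE hp hq fun _ b _ _ => mem_univ b

theorem IsBaseDistrib.paretoEff (hE : M.E = Set.univ) (hp : IsBaseDistrib M p) :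
    ParetoEff (fun A : Finset α => M.Indep (A : Set α)) p := by
  refine ⟨hp.isDistrib_indep, fun ⟨D, hD, hdom, u, hu⟩ => ?_⟩
  exact (sum_sat_le_of_isBaseDistrib hE hp hD).not_gt
    (sum_lt_sum (fun v _ => hdom v) ⟨u, mem_univ u, hu⟩)

theorem ParetoEff.isBaseDistrib (hp : ParetoEff (fun A : Finset α => M.Indep (A : Set α)) p) :
    IsBaseDistrib M p := by
  refine ⟨hp.1.1, fun A hA => ?_, hp.1.2.2⟩
  by_contra hAb
  obtain ⟨B, hB⟩ := M.exists_isBase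
  obtain ⟨e, he, hind⟩ := (hp.1.2.1 A hA).exists_insert_of_not_isBase hAb hB
  have heA : e ∉ A := he.2
  -- move all of the mass of `A` to `insert e A`
  have hind' : M.Indep ((insert e A : Finset α) : Set α) := by simpa using hind
  obtain ⟨ε, hε, hD⟩ :=
    hp.1.exists_pos_add_smul (IsFeasibleDirection.single_sub_single hA (hp.1.2.1 A hA) hind')
  have hsat : ∀ w, sat (p + ε • (Pi.single (insert e A) 1 - Pi.single A 1)) w
      = sat p w + ε * ((if w ∈ insert e A then 1 else 0) - (if w ∈ A then 1 else 0)) := by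
    simp [sat_add, sat_smul, sat_sub, sat_single]
  refine hp.2 ⟨_, hD, fun w => ?_, e, ?_⟩
  · rw [hsat]
    have : (0 : ℝ) ≤ (if w ∈ insert e A then 1 else 0) - (if w ∈ A then 1 else 0) := by
      split_ifs with h₁ h₂ <;> simp_all
    linarith [mul_nonneg hε.le this]
  · simp [hsat, heA, hε]

theorem exists_feasibleDirection_of_reflTransGen (hp : IsBaseDistrib M p) {u v : α}
    (h : ReflTransGen (Swappable M p) u v) :
    ∃ Δ, IsFeasibleDirection (fun A : Finset α => M.IsBase (A : Set α)) p Δ ∧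
      ∀ w, sat Δ w = (if w = v then 1 else 0) - (if w = u then 1 else 0) := by
  induction h with
  | refl => exact ⟨0, IsFeasibleDirection.zero p, fun w => by simp [sat_zero]⟩
  | @tail b a _ hba ih =>
    obtain ⟨Δ, hΔ, hsat⟩ := ih
    obtain ⟨A, hA, hbA, haA, hbase⟩ := hba
    refine ⟨Δ + (Pi.single ((insert a A).erase b) 1 - Pi.single A 1),
      hΔ.add (IsFeasibleDirection.single_sub_single hA (hp.2.1 A hA) (by simpa)), fun w => ?_⟩
    rw [sat_add, sat_sub, sat_single, sat_single, hsat,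
      indicator_insert_erase_sub_indicator hbA haA]
    ring

theorem exists_isBaseDistrib_transfer (hp : IsBaseDistrib M p) {u v : α}
    (h : ReflTransGen (Swappable M p) u v) (huv : u ≠ v) :
    ∃ p', IsBaseDistrib M p' ∧ sat p' u < sat p u ∧ sat p v < sat p' v ∧
      ∀ w, w ≠ u → w ≠ v → sat p' w = sat p w := by
  obtain ⟨Δ, hΔ, hsat⟩ := exists_feasibleDirection_of_reflTransGen hp h
  obtain ⟨ε, hε, hp'⟩ := IsDistrib.exists_pos_add_smul hp hΔ
  have hsat' : ∀ w, sat (p + ε • Δ) w = sat p w + ε * sat Δ w := fun w => by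
    rw [sat_add, sat_smul]
  refine ⟨_, hp', ?_, ?_, fun w hwu hwv => ?_⟩
  · simp [hsat', hsat, huv, hε]
  · simp [hsat', hsat, huv.symm, hε]
  · simp [hsat', hsat, hwu, hwv]

theorem exists_reachable_lt (hE : M.E = Set.univ) (hp : IsBaseDistrib M p)
    (hq : IsBaseDistrib M q) {u : α} (h : sat q u < sat p u) :
    ∃ v, sat p v < sat q v ∧ ReflTransGen (Swappable M p) u v := by
  classical
  set R := univ.filter (ReflTransGen (Swappable M p) u)
  have hRc := sum_sat_le_of_swap_closed hE hp hq.isDistrib_indep (T := Rᶜ) fun a b hba ha => by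
    simp only [R, mem_compl, mem_filter, mem_univ, true_and] at ha ⊢
    exact fun hb => ha (hb.tail hba)
  have htot := sum_sat_le_of_isBaseDistrib hE hq hp.isDistrib_indep
  rw [← sum_add_sum_compl R, ← sum_add_sum_compl R (sat q)] at htot
  have huR : u ∈ R := mem_filter.2 ⟨mem_univ u, ReflTransGen.refl⟩
  obtain ⟨v, hvR, hv⟩ := exists_lt_of_sum_le_of_lt (by linarith) huR h
  exact ⟨v, hv, (mem_filter.1 hvR).2⟩

theorem exists_reaching_lt (hE : M.E = Set.univ) (hp : IsBaseDistrib M p)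
    (hq : IsDistrib (fun A : Finset α => M.Indep (A : Set α)) q) {u : α}
    (h : sat p u < sat q u) :
    ∃ v, sat q v < sat p v ∧ ReflTransGen (Swappable M p) v u := by
  classical
  set R := univ.filter (fun v => ReflTransGen (Swappable M p) v u)
  have hR := sum_sat_le_of_swap_closed hE hp hq (T := R) fun a b hba ha => by
    simp only [R, mem_filter, mem_univ, true_and] at ha ⊢
    exact ha.head hba
  have huR : u ∈ R := mem_filter.2 ⟨mem_univ u, ReflTransGen.refl⟩
  obtain ⟨v, hvR, hv⟩ := exists_lt_of_sum_le_of_lt hR huR h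
  exact ⟨v, hv, (mem_filter.1 hvR).2⟩

end MatroidDistributions

section Fairness

variable [Fintype α] [DecidableEq α] {M : Matroid α} {F : Finset α → ℝ}

theorem MaxminFair.minmaxPareto (hE : M.E = Set.univ)
    (h : MaxminFair (fun A : Finset α => M.Indep (A : Set α)) F) :
    MinmaxPareto (fun A : Finset α => M.Indep (A : Set α)) F := by
  have hF := h.paretoEff
  refine ⟨hF, fun D hD u hu => ?_⟩
  by_contra! hcon
  obtain ⟨v, hv, hpath⟩ := exists_reachable_lt hE hF.isBaseDistrib hD.isBaseDistrib hu
  have huv : u ≠ v := by rintro rfl; linarith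
  obtain ⟨p', hp', -, hv', hw'⟩ := exists_isBaseDistrib_transfer hF.isBaseDistrib hpath huv
  obtain ⟨z, hz, hzv⟩ := h.2 p' hp'.isDistrib_indep v hv'
  obtain rfl : z = u := by
    by_contra hzu
    obtain rfl | hzv' := eq_or_ne z v
    · linarith
    · linarith [hw' z hzu hzv']
  linarith [hcon v hv]

theorem MinmaxPareto.maxminFair (hE : M.E = Set.univ)
    (h : MinmaxPareto (fun A : Finset α => M.Indep (A : Set α)) F) :
    MaxminFair (fun A : Finset α => M.Indep (A : Set α)) F := by
  have hF := h.1.isBaseDistrib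
  refine ⟨h.1.1, fun D hD u hu => ?_⟩
  by_contra! hcon
  obtain ⟨v, hv, hpath⟩ := exists_reaching_lt hE hF hD hu
  have hvu : v ≠ u := by rintro rfl; linarith
  obtain ⟨p', hp', hv', -, hw'⟩ := exists_isBaseDistrib_transfer hF hpath hvu
  obtain ⟨z, hz, hvz⟩ := h.2 p' (hp'.paretoEff hE) v hv'
  obtain rfl : z = u := by
    by_contra hzu
    obtain rfl | hzv := eq_or_ne z v
    · linarith
    · linarith [hw' z hzv hzu]
  linarith [hcon v hv]

end Fairness

theorem maxminFair_iff_minmaxPareto_matroid_general [Fintype α] [DecidableEq α]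
    (M : Matroid α) (hE : M.E = Set.univ) (F : Finset α → ℝ) :
    MaxminFair (fun A : Finset α => M.Indep (A : Set α)) F ↔
      MinmaxPareto (fun A : Finset α => M.Indep (A : Set α)) F :=
  ⟨MaxminFair.minmaxPareto hE, MinmaxPareto.maxminFair hE⟩

/-- For the search problem associated with a matroid `M` on a finite nonempty ground set
(the whole type `α`, individuals `= α`, feasible solutions `=` independent sets of `M`),
a distribution over the solutions is maxmin-fair if and only if it is minmax-Pareto. -/
theorem maxminFair_iff_minmaxPareto_matroid [Fintype α] [DecidableEq α] [Nonempty α]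
    (M : Matroid α) (hE : M.E = Set.univ) (F : Finset α → ℝ) :
    MaxminFair (fun A : Finset α => M.Indep (A : Set α)) F ↔
      MinmaxPareto (fun A : Finset α => M.Indep (A : Set α)) F :=
  maxminFair_iff_minmaxPareto_matroid_general M hE F
end

section
/- Let G be a finite bipartite graph with bipartition (L, R). Call a nonempty set X ⊆ L fairly isolated if X = L or if for every S ⊊ X (possibly empty) and every T with X ⊊ T ⊆ L, one has (|Γ(X)| − |Γ(S)|) · |T \ X| < (|Γ(T)| − |Γ(X)|) · |X \ S|. Then any two fairly isolated sets X and Y are comparable: X ⊆ Y or Y ⊆ X. -/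
/-!
A finite bipartite graph with bipartition `(L, R)` is modelled by its edge set
`E : Finset (L × R)`.  `nbhd E S` is the neighbourhood `Γ(S)` of `S ⊆ L` (so
`nbhd E ∅ = ∅`).
-/

variable {L R : Type*}

/-- The neighbourhood `Γ(S) ⊆ R` of a set `S ⊆ L` of left vertices. -/
def nbhd [DecidableEq L] [DecidableEq R] (E : Finset (L × R)) (S : Finset L) : Finset R :=
  (E.filter (fun e => e.1 ∈ S)).image Prod.snd

/-- A nonempty set `X ⊆ L` is fairly isolated if `X = L`, or for every `S ⊊ X`
(possibly empty) and every `T` with `X ⊊ T ⊆ L` we have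
`(|Γ(X)| − |Γ(S)|) · |T \ X| < (|Γ(T)| − |Γ(X)|) · |X \ S|`. -/
def FairlyIsolated [Fintype L] [DecidableEq L] [DecidableEq R]
    (E : Finset (L × R)) (X : Finset L) : Prop :=
  X.Nonempty ∧ (X = Finset.univ ∨
    ∀ S : Finset L, S ⊂ X → ∀ T : Finset L, X ⊂ T →
      (((nbhd E X).card : ℝ) - ((nbhd E S).card : ℝ)) * (((T \ X).card : ℝ)) <
        (((nbhd E T).card : ℝ) - ((nbhd E X).card : ℝ)) * (((X \ S).card : ℝ)))

lemma nbhd_union [DecidableEq L] [DecidableEq R] (E : Finset (L × R)) (X Y : Finset L) :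
    nbhd E (X ∪ Y) = nbhd E X ∪ nbhd E Y := by
  ext r
  simp only [nbhd, Finset.mem_image, Finset.mem_filter, Finset.mem_union]
  constructor
  · rintro ⟨e, ⟨he, hx | hy⟩, rfl⟩
    · exact Or.inl ⟨e, ⟨he, hx⟩, rfl⟩
    · exact Or.inr ⟨e, ⟨he, hy⟩, rfl⟩
  · rintro (⟨e, ⟨he, hx⟩, rfl⟩ | ⟨e, ⟨he, hy⟩, rfl⟩)
    · exact ⟨e, ⟨he, Or.inl hx⟩, rfl⟩
    · exact ⟨e, ⟨he, Or.inr hy⟩, rfl⟩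

lemma nbhd_inter_subset [DecidableEq L] [DecidableEq R] (E : Finset (L × R)) (X Y : Finset L) :
    nbhd E (X ∩ Y) ⊆ nbhd E X ∩ nbhd E Y := by
  intro r hr
  simp only [nbhd, Finset.mem_image, Finset.mem_filter, Finset.mem_inter] at hr ⊢
  obtain ⟨e, ⟨he, hx, hy⟩, rfl⟩ := hr
  exact ⟨⟨e, ⟨he, hx⟩, rfl⟩, ⟨e, ⟨he, hy⟩, rfl⟩⟩

lemma nbhd_submodular [DecidableEq L] [DecidableEq R] (E : Finset (L × R)) (X Y : Finset L) :
    (nbhd E (X ∪ Y)).card + (nbhd E (X ∩ Y)).card ≤ (nbhd E X).card + (nbhd E Y).card := by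
  calc (nbhd E (X ∪ Y)).card + (nbhd E (X ∩ Y)).card
      ≤ (nbhd E X ∪ nbhd E Y).card + (nbhd E X ∩ nbhd E Y).card := by
        rw [nbhd_union]
        exact Nat.add_le_add_left (Finset.card_le_card (nbhd_inter_subset E X Y)) _
    _ = (nbhd E X).card + (nbhd E Y).card := Finset.card_union_add_card_inter _ _

/-- Any two fairly isolated sets are comparable: one contains the other. -/
theorem fairlyIsolated_comparable [Fintype L] [Fintype R] [DecidableEq L] [DecidableEq R]
    (E : Finset (L × R)) (X Y : Finset L)
    (hX : FairlyIsolated E X) (hY : FairlyIsolated E Y) :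
    X ⊆ Y ∨ Y ⊆ X := by
  by_contra h
  push_neg at h
  obtain ⟨hXY, hYX⟩ := h
  rcases hX.2 with hXu | hXf
  · exact hYX (hXu ▸ Y.subset_univ)
  rcases hY.2 with hYu | hYf
  · exact hXY (hYu ▸ X.subset_univ)
  have hSX : X ∩ Y ⊂ X := by
    refine ⟨Finset.inter_subset_left, fun hc => hXY fun x hx => ?_⟩
    exact (Finset.mem_inter.1 (hc hx)).2
  have hSY : X ∩ Y ⊂ Y := by
    refine ⟨Finset.inter_subset_right, fun hc => hYX fun y hy => ?_⟩
    exact (Finset.mem_inter.1 (hc hy)).1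
  have hTX : X ⊂ X ∪ Y := by
    refine ⟨Finset.subset_union_left, fun hc => hYX fun y hy => hc (Finset.mem_union_right _ hy)⟩
  have hTY : Y ⊂ X ∪ Y := by
    refine ⟨Finset.subset_union_right, fun hc => hXY fun x hx => hc (Finset.mem_union_left _ hx)⟩
  have h1 := hXf (X ∩ Y) hSX (X ∪ Y) hTX
  have h2 := hYf (X ∩ Y) hSY (X ∪ Y) hTY
  have e1 : (X ∪ Y) \ X = Y \ X := by ext z; simp [Finset.mem_sdiff]; tauto
  have e2 : (X ∪ Y) \ Y = X \ Y := by ext z; simp [Finset.mem_sdiff]; tauto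
  have e3 : X \ (X ∩ Y) = X \ Y := by ext z; simp [Finset.mem_sdiff]
  have e4 : Y \ (X ∩ Y) = Y \ X := by ext z; simp [Finset.mem_sdiff]
  rw [e1, e3] at h1
  rw [e2, e4] at h2
  have hsub := nbhd_submodular E X Y
  have hsub' : ((nbhd E (X ∪ Y)).card : ℝ) + ((nbhd E (X ∩ Y)).card : ℝ)
      ≤ ((nbhd E X).card : ℝ) + ((nbhd E Y).card : ℝ) := by exact_mod_cast hsub
  have hp : (0:ℝ) ≤ ((X \ Y).card : ℝ) := by positivity
  have hq : (0:ℝ) ≤ ((Y \ X).card : ℝ) := by positivity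
  nlinarith [mul_nonneg (sub_nonneg.2 hsub') (add_nonneg hp hq)]
end
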